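/- Let x, r, s, p be points in a Euclidean space X, let L₁ := aff{x, r}, L₂ := aff{s, r}, u := P_{L₁} p, v := P_{L₂} p, and suppose r ∉ {x, s, u, v}. Then ‖u − v‖ ≤ ‖p − r‖ · sin(∠x r s). -/
import Mathlib

open RealInnerProductSpace

theorem gDR_key {X : Type*} [NormedAddCommGroup X] [InnerProductSpace ℝ X]
    (a b q : X) (ha : a ≠ 0) (hb : b ≠ 0)
    (h1 : ⟪q, a⟫ = ⟪a, a⟫) (h2 : ⟪q, b⟫ = ⟪b, b⟫) :
    ‖a - b‖ ≤ ‖q‖ * Real.sqrt (1 - (⟪a, b⟫ / (‖a‖ * ‖b‖)) ^ 2) := by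
  set A : ℝ := ⟪a, a⟫ with hA
  set B : ℝ := ⟪b, b⟫ with hB
  set C : ℝ := ⟪a, b⟫ with hC
  set Q : ℝ := ⟪q, q⟫ with hQ
  have hApos : 0 < A := by
    rw [hA, real_inner_self_eq_norm_sq]
    have : ‖a‖ ≠ 0 := norm_ne_zero_iff.2 ha
    positivity
  have hBpos : 0 < B := by
    rw [hB, real_inner_self_eq_norm_sq]
    have : ‖b‖ ≠ 0 := norm_ne_zero_iff.2 hb
    positivity
  have hQ0 : 0 ≤ Q := real_inner_self_nonneg
  have hCS0 : C ^ 2 ≤ A * B := by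
    have := real_inner_mul_inner_self_le a b
    nlinarith [this]
  have hab : (‖a‖ * ‖b‖) ^ 2 = A * B := by
    rw [mul_pow, ← real_inner_self_eq_norm_sq, ← real_inner_self_eq_norm_sq]
  have hba : ⟪b, a⟫ = C := (real_inner_comm a b).trans hC.symm
  have haq : ⟪a, q⟫ = A := (real_inner_comm q a).trans h1
  have hbq : ⟪b, q⟫ = B := (real_inner_comm q b).trans h2
  have hmain : ⟪a - b, a - b⟫ * (A * B) ≤ Q * (A * B - C ^ 2) := by
    rw [real_inner_sub_sub_self, ← hA, ← hB, ← hC]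
    rcases eq_or_lt_of_le hCS0 with hD | hD
    · have cs1 := real_inner_mul_inner_self_le q (A • b - C • a)
      have cs2 := real_inner_mul_inner_self_le q (B • a - C • b)
      simp only [inner_sub_left, inner_sub_right, real_inner_smul_left, real_inner_smul_right,
        ← hA, ← hB, ← hC, ← hQ, h1, h2, hba, haq, hbq] at cs1 cs2
      nlinarith [cs1, cs2, sq_nonneg (A - B)]
    · have hw : (0:ℝ) ≤ ⟪(A * B - C ^ 2) • q - (B * (A - C)) • a - (A * (B - C)) • b,
          (A * B - C ^ 2) • q - (B * (A - C)) • a - (A * (B - C)) • b⟫ := real_inner_self_nonneg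
      simp only [inner_sub_left, inner_sub_right, real_inner_smul_left, real_inner_smul_right,
        ← hA, ← hB, ← hC, ← hQ, h1, h2, hba, haq, hbq] at hw
      have hkey : 0 ≤ (A * B - C ^ 2) * (Q * (A * B - C ^ 2) - A * B * (A + B - 2 * C)) := by
        nlinarith [hw]
      nlinarith [hkey, hD]
  have hnq : ‖q‖ = Real.sqrt Q := by
    rw [hQ, real_inner_self_eq_norm_sq, Real.sqrt_sq (norm_nonneg _)]
  have hnab : ‖a - b‖ = Real.sqrt ⟪a - b, a - b⟫ := by
    rw [real_inner_self_eq_norm_sq, Real.sqrt_sq (norm_nonneg _)]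
  rw [hnq, hnab, ← Real.sqrt_mul hQ0]
  apply Real.sqrt_le_sqrt
  rw [div_pow, hab, show 1 - C ^ 2 / (A * B) = (A * B - C ^ 2) / (A * B) by
    field_simp, mul_div_assoc', le_div_iff₀ (by positivity)]
  exact hmain

theorem gDR_ratio_sq {X : Type*} [NormedAddCommGroup X] [InnerProductSpace ℝ X]
    (e f : X) (t t' : ℝ) (ht : t ≠ 0) (ht' : t' ≠ 0) (he : e ≠ 0) (hf : f ≠ 0) :
    (⟪t • e, t' • f⟫ / (‖t • e‖ * ‖t' • f‖)) ^ 2 = (⟪e, f⟫ / (‖e‖ * ‖f‖)) ^ 2 := by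
  rw [real_inner_smul_left, real_inner_smul_right, norm_smul, norm_smul,
    Real.norm_eq_abs, Real.norm_eq_abs]
  have h1 : ‖e‖ ≠ 0 := norm_ne_zero_iff.2 he
  have h2 : ‖f‖ ≠ 0 := norm_ne_zero_iff.2 hf
  have h3 : |t| ≠ 0 := abs_ne_zero.2 ht
  have h4 : |t'| ≠ 0 := abs_ne_zero.2 ht'
  rw [div_pow, div_pow, mul_pow, mul_pow, mul_pow, mul_pow, mul_pow, sq_abs, sq_abs]
  field_simp

theorem gDR_circumcircle {X : Type*} [NormedAddCommGroup X] [InnerProductSpace ℝ X]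
    [FiniteDimensional ℝ X]
    (x r s p : X)
    (u v : X)
    (hu : u = (EuclideanGeometry.orthogonalProjection (affineSpan ℝ {x, r}) p : X))
    (hv : v = (EuclideanGeometry.orthogonalProjection (affineSpan ℝ {s, r}) p : X))
    (hrx : r ≠ x) (hrs : r ≠ s) (hru : r ≠ u) (hrv : r ≠ v) :
    ‖u - v‖ ≤ ‖p - r‖ *
      Real.sqrt (1 - (⟪x - r, s - r⟫ / (‖x - r‖ * ‖s - r‖)) ^ 2) := by
  -- memberships
  have hrL1 : r ∈ affineSpan ℝ ({x, r} : Set X) := mem_affineSpan ℝ (by simp)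
  have hrL2 : r ∈ affineSpan ℝ ({s, r} : Set X) := mem_affineSpan ℝ (by simp)
  have huL1 : u ∈ affineSpan ℝ ({x, r} : Set X) := by
    rw [hu]; exact (EuclideanGeometry.orthogonalProjection (affineSpan ℝ {x, r}) p).2
  have hvL2 : v ∈ affineSpan ℝ ({s, r} : Set X) := by
    rw [hv]; exact (EuclideanGeometry.orthogonalProjection (affineSpan ℝ {s, r}) p).2
  -- right angles
  have h1 : ⟪p - r, u - r⟫ = ⟪u - r, u - r⟫ := by
    have hperp := EuclideanGeometry.vsub_orthogonalProjection_mem_direction_orthogonal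
      (affineSpan ℝ ({x, r} : Set X)) p
    rw [← hu] at hperp
    have hmem : u -ᵥ r ∈ (affineSpan ℝ ({x, r} : Set X)).direction :=
      AffineSubspace.vsub_mem_direction huL1 hrL1
    have h0 : ⟪u - r, p - u⟫ = (0 : ℝ) := hperp _ hmem
    have h0' : ⟪u - r, p - r⟫ - ⟪u - r, u - r⟫ = 0 := by
      rw [← inner_sub_right, show (p - r) - (u - r) = p - u by abel]; exact h0
    rw [real_inner_comm]
    linarith [h0']
  have h2 : ⟪p - r, v - r⟫ = ⟪v - r, v - r⟫ := by
    have hperp := EuclideanGeometry.vsub_orthogonalProjection_mem_direction_orthogonal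
      (affineSpan ℝ ({s, r} : Set X)) p
    rw [← hv] at hperp
    have hmem : v -ᵥ r ∈ (affineSpan ℝ ({s, r} : Set X)).direction :=
      AffineSubspace.vsub_mem_direction hvL2 hrL2
    have h0 : ⟪v - r, p - v⟫ = (0 : ℝ) := hperp _ hmem
    have h0' : ⟪v - r, p - r⟫ - ⟪v - r, v - r⟫ = 0 := by
      rw [← inner_sub_right, show (p - r) - (v - r) = p - v by abel]; exact h0
    rw [real_inner_comm]
    linarith [h0']
  -- u - r is a multiple of x - r, v - r a multiple of s - r
  have hur0 : u - r ≠ 0 := sub_ne_zero.2 (Ne.symm hru)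
  have hvr0 : v - r ≠ 0 := sub_ne_zero.2 (Ne.symm hrv)
  have hxr0 : x - r ≠ 0 := sub_ne_zero.2 (Ne.symm hrx)
  have hsr0 : s - r ≠ 0 := sub_ne_zero.2 (Ne.symm hrs)
  obtain ⟨t, ht⟩ : ∃ t : ℝ, t • (x - r) = u - r := by
    have := AffineSubspace.vsub_mem_direction huL1 hrL1
    rw [direction_affineSpan] at this
    simpa [vsub_eq_sub] using mem_vectorSpan_pair.1 this
  obtain ⟨w, hw⟩ : ∃ w : ℝ, w • (s - r) = v - r := by
    have := AffineSubspace.vsub_mem_direction hvL2 hrL2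
    rw [direction_affineSpan] at this
    simpa [vsub_eq_sub] using mem_vectorSpan_pair.1 this
  have ht0 : t ≠ 0 := by
    rintro rfl; rw [zero_smul] at ht; exact hur0 ht.symm
  have hw0 : w ≠ 0 := by
    rintro rfl; rw [zero_smul] at hw; exact hvr0 hw.symm
  -- assemble
  have key := gDR_key (u - r) (v - r) (p - r) hur0 hvr0 h1 h2
  have hsq : (⟪u - r, v - r⟫ / (‖u - r‖ * ‖v - r‖)) ^ 2
      = (⟪x - r, s - r⟫ / (‖x - r‖ * ‖s - r‖)) ^ 2 := by
    rw [← ht, ← hw]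
    exact gDR_ratio_sq (x - r) (s - r) t w ht0 hw0 hxr0 hsr0
  rw [show u - v = (u - r) - (v - r) by abel, ← hsq]
  exact key
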